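/- Let T be an abelian regular subgroup of Aff(V) with δ as above. Then δ(x·δ(y)) = δ(x)∘δ(y) for all x, y ∈ V. -/
import Mathlib


theorem stmt {F V : Type*} [Field F] [AddCommGroup V] [Module F V]
    (T : Subgroup (V ≃ᵃ[F] V))
    (hcomm : ∀ g ∈ T, ∀ h ∈ T, g * h = h * g)
    (hreg : ∀ v : V, ∃! g : V ≃ᵃ[F] V, g ∈ T ∧ g 0 = v)
    (τ : V → (V ≃ᵃ[F] V)) (hτT : ∀ x, τ x ∈ T) (hτ0 : ∀ x, τ x 0 = x)
    (δ : V → Module.End F V)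
    (hδ : ∀ x z, τ x z = z + δ x z + x) :
    ∀ x y z : V, δ (δ y x) z = δ y (δ x z) := by
  -- evaluation of products
  have hmul : ∀ a b : V, ∀ z : V, (τ a * τ b) z = τ a (τ b z) := by
    intro a b z; rfl
  -- symmetry of δ a b
  have hsym : ∀ a b : V, δ a b = δ b a := by
    intro a b
    have h := congrArg (fun g : V ≃ᵃ[F] V => g 0) (hcomm (τ a) (hτT a) (τ b) (hτT b))
    simp only [hmul, hτ0] at h
    rw [hδ, hδ] at h
    -- h : b + δ a b + a = a + δ b a + b
    have h2 : δ a b + (b + a) = δ b a + (b + a) := by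
      calc δ a b + (b + a) = b + δ a b + a := by abel
        _ = a + δ b a + b := h
        _ = δ b a + (b + a) := by abel
    exact add_right_cancel h2
  -- product formula: τ a * τ b = τ (b + δ a b + a)
  have hprod : ∀ a b : V, τ a * τ b = τ (b + δ a b + a) := by
    intro a b
    obtain ⟨g, hg, hgu⟩ := hreg (b + δ a b + a)
    have h1 : τ a * τ b = g := by
      apply hgu
      constructor
      · exact T.mul_mem (hτT a) (hτT b)
      · show (τ a * τ b) 0 = _
        rw [hmul, hτ0, hδ]
    have h2 : τ (b + δ a b + a) = g := by
      apply hgu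
      exact ⟨hτT _, hτ0 _⟩
    rw [h1, h2]
  -- key identity E
  have hE : ∀ a b z : V, δ (b + δ a b + a) z = δ b z + δ a z + δ a (δ b z) := by
    intro a b z
    have h := congrArg (fun g : V ≃ᵃ[F] V => g z) (hprod a b)
    simp only [hmul] at h
    rw [hδ, hδ, hδ] at h
    -- h : (z + δ b z + b) + δ a (z + δ b z + b) + a = z + δ (b + δ a b + a) z + (b + δ a b + a)
    have hlin : δ a (z + δ b z + b) = δ a z + δ a (δ b z) + δ a b := by
      simp [map_add]
    rw [hlin] at h
    have h2 : (δ b z + δ a z + δ a (δ b z)) + (z + b + δ a b + a)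
        = δ (b + δ a b + a) z + (z + b + δ a b + a) := by
      calc (δ b z + δ a z + δ a (δ b z)) + (z + b + δ a b + a)
          = z + δ b z + b + (δ a z + δ a (δ b z) + δ a b) + a := by abel
        _ = z + δ (b + δ a b + a) z + (b + δ a b + a) := h
        _ = δ (b + δ a b + a) z + (z + b + δ a b + a) := by abel
    exact (add_right_cancel h2).symm
  -- additivity of δ in its first argument
  have hadd : ∀ u v w : V, δ (u + v) w = δ u w + δ v w := by
    intro u v w
    rw [hsym (u + v) w, map_add, hsym w u, hsym w v]
  -- commutation of δ a and δ b
  have hcom : ∀ a b z : V, δ a (δ b z) = δ b (δ a z) := by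
    intro a b z
    have h1 := hE a b z
    have h2 := hE b a z
    have harg : b + δ a b + a = a + δ b a + b := by rw [hsym a b]; abel
    rw [harg] at h1
    have h3 : δ b z + δ a z + δ a (δ b z) = δ b z + δ a z + δ b (δ a z) := by
      calc δ b z + δ a z + δ a (δ b z) = δ (a + δ b a + b) z := h1.symm
        _ = δ a z + δ b z + δ b (δ a z) := h2
        _ = δ b z + δ a z + δ b (δ a z) := by abel
    exact add_left_cancel h3
  -- δ (δ a b) = δ a ∘ δ b
  have hkey : ∀ a b z : V, δ (δ a b) z = δ a (δ b z) := by
    intro a b z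
    have h := hE a b z
    rw [hadd, hadd] at h
    -- h : δ b z + δ (δ a b) z + δ a z = δ b z + δ a z + δ a (δ b z)
    have h2 : δ (δ a b) z + (δ b z + δ a z) = δ a (δ b z) + (δ b z + δ a z) := by
      calc δ (δ a b) z + (δ b z + δ a z) = δ b z + δ (δ a b) z + δ a z := by abel
        _ = δ b z + δ a z + δ a (δ b z) := h
        _ = δ a (δ b z) + (δ b z + δ a z) := by abel
    exact add_right_cancel h2
  intro x y z
  rw [hsym y x, hkey, hcom]
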